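/- arXiv:1804.06501 — 3 statements merged into one kernel-verified Lean document; each statement's English description precedes it below -/
import Mathlib

section
/- With the hypotheses of Gaussian quadrature (nodes at roots of p_n, weights solving the moment system for degrees 0,…,n−1), all quadrature weights w_q are strictly positive. -/
/-!
Gaussian quadrature is exact up to degree `2n - 1`: dividing `P` by `pₙ`, the quotient has
degree `< n`, so it is integrated to zero by orthogonality, and it contributes nothing at the
nodes, the roots of `pₙ`. Applied to the square of the Lagrange basis polynomial `ℓ_q` of the
nodes, of degree `2n - 2`, the rule gives `w_q = ∫ ℓ_q² ω > 0`.
-/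

open MeasureTheory Polynomial

section WeightedIntegral

variable {μ : Measure ℝ} {ω : ℝ → ℝ}

lemma integrable_eval_mul (hmom : ∀ k : ℕ, Integrable (fun x => x ^ k * ω x) μ) (P : ℝ[X]) :
    Integrable (fun t => P.eval t * ω t) μ := by
  induction P using Polynomial.induction_on' with
  | add P Q hP hQ =>
    simp only [eval_add, add_mul]
    exact hP.add hQ
  | monomial k a => simpa [mul_assoc] using (hmom k).const_mul a

lemma integral_eval_add_mul (hmom : ∀ k : ℕ, Integrable (fun x => x ^ k * ω x) μ) (P Q : ℝ[X]) :
    ∫ t, (P + Q).eval t * ω t ∂μ = ∫ t, P.eval t * ω t ∂μ + ∫ t, Q.eval t * ω t ∂μ := by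
  simp_rw [eval_add, add_mul]
  exact integral_add (integrable_eval_mul hmom P) (integrable_eval_mul hmom Q)

-- The first `n` terms of a polynomial sequence span the polynomials of degree `< n`.
lemma integral_eval_mul_mul_eq_zero_of_natDegree_lt
    (hmom : ∀ k : ℕ, Integrable (fun x => x ^ k * ω x) μ) (S : Sequence ℝ) {n : ℕ} {P : ℝ[X]}
    (horth : ∀ k < n, ∫ t, P.eval t * (S k).eval t * ω t ∂μ = 0)
    {Q : ℝ[X]} (hQ : Q.natDegree < n) :
    ∫ t, (P * Q).eval t * ω t ∂μ = 0 := by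
  have hQ_mem : Q ∈ Submodule.span ℝ (S '' Set.Iio n) := by
    rw [S.span_degreeLT fun _ _ => isUnit_iff_ne_zero.mpr (by simp), mem_degreeLT]
    by_cases hQ0 : Q = 0
    · simp [hQ0]
    · exact (natDegree_lt_iff_degree_lt hQ0).mp hQ
  clear hQ
  induction hQ_mem using Submodule.span_induction with
  | mem Q hQ =>
    obtain ⟨k, hk, rfl⟩ := hQ
    simpa using horth k hk
  | zero => simp
  | add Q R _ _ hQ hR => rw [mul_add, integral_eval_add_mul hmom, hQ, hR, add_zero]
  | smul a Q _ hQ =>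
    simp_rw [mul_smul_comm, eval_smul, smul_eq_mul, mul_assoc, integral_const_mul]
    rw [hQ, mul_zero]

lemma integral_eval_mul_eq_sum_of_natDegree_lt_two_mul
    (hmom : ∀ k : ℕ, Integrable (fun x => x ^ k * ω x) μ) {ι : Type*} [Fintype ι]
    {x w : ι → ℝ} {n : ℕ} {p : ℝ[X]} (hp : p.natDegree = n)
    (horth : ∀ Q : ℝ[X], Q.natDegree < n → ∫ t, (p * Q).eval t * ω t ∂μ = 0)
    (hroots : ∀ q, p.eval (x q) = 0)
    (hexact : ∀ P : ℝ[X], P.natDegree < n → ∫ t, P.eval t * ω t ∂μ = ∑ q, P.eval (x q) * w q)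
    {P : ℝ[X]} (hP : P.natDegree < 2 * n) :
    ∫ t, P.eval t * ω t ∂μ = ∑ q, P.eval (x q) * w q := by
  have hn : n ≠ 0 := by omega
  have hp0 : p ≠ 0 := ne_zero_of_natDegree_gt (hp ▸ Nat.pos_of_ne_zero hn)
  have hrem : (P % p).natDegree < n := hp ▸ natDegree_mod_lt P (hp ▸ hn)
  have hquot : (P / p).natDegree < n := by
    by_cases hq0 : P / p = 0
    · rw [hq0, natDegree_zero]
      exact Nat.pos_of_ne_zero hn
    · have : (p * (P / p)).natDegree < 2 * n := by
        rw [eq_sub_of_add_eq (EuclideanDomain.div_add_mod P p)]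
        exact (natDegree_sub_le _ _).trans_lt (max_lt hP (by omega))
      rw [natDegree_mul hp0 hq0] at this
      omega
  rw [← EuclideanDomain.div_add_mod P p, integral_eval_add_mul hmom, horth _ hquot, zero_add,
    hexact _ hrem]
  simp [hroots]

lemma integral_eval_mul_pos [NullSingletonClass μ] (hμ : μ ≠ 0) (hω : ∀ᵐ t ∂μ, 0 < ω t)
    (hmom : ∀ k : ℕ, Integrable (fun x => x ^ k * ω x) μ) {P : ℝ[X]} (hP0 : P ≠ 0)
    (hP : ∀ t, 0 ≤ P.eval t) :
    0 < ∫ t, P.eval t * ω t ∂μ := by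
  set f := fun t => P.eval t * ω t
  have hnonneg : 0 ≤ᵐ[μ] f := hω.mono fun t ht => mul_nonneg (hP t) ht.le
  rw [integral_pos_iff_support_of_nonneg_ae hnonneg (integrable_eval_mul hmom P)]
  -- `P` has finitely many roots, a null set
  have hsupp : Function.support f ∈ ae μ := by
    filter_upwards [hω, (finite_setOfPred_isRoot hP0).countable.ae_notMem μ] with t hωt hroot
    exact mul_ne_zero hroot hωt.ne'
  calc 0 < μ Set.univ := Measure.measure_univ_pos.mpr hμ
    _ ≤ μ (Function.support f) + μ (Function.support f)ᶜ := measure_univ_le_add_compl _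
    _ = μ (Function.support f) := by rw [mem_ae_iff.mp hsupp, add_zero]

end WeightedIntegral

lemma sum_eval_lagrange_basis_sq_mul {ι : Type*} [Fintype ι] [DecidableEq ι] {x : ι → ℝ}
    (hx : Function.Injective x) (w : ι → ℝ) (q : ι) :
    ∑ r, ((Lagrange.basis Finset.univ x q) ^ 2).eval (x r) * w r = w q := by
  rw [Finset.sum_eq_single q]
  · simp [Lagrange.eval_basis_self hx.injOn (Finset.mem_univ q)]
  · intro r _ hrq
    simp [Lagrange.eval_basis_of_ne hrq.symm (Finset.mem_univ r)]
  · simp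

lemma natDegree_lagrange_basis_sq_lt {ι : Type*} [Fintype ι] [DecidableEq ι] {x : ι → ℝ}
    (hx : Function.Injective x) (q : ι) :
    ((Lagrange.basis Finset.univ x q) ^ 2).natDegree < 2 * Fintype.card ι := by
  rw [natDegree_pow, Lagrange.natDegree_basis hx.injOn (Finset.mem_univ q), Finset.card_univ]
  have := Fintype.card_pos_iff.mpr ⟨q⟩
  omega

theorem stmt_2_general (Γ : Set ℝ) (hΓm : MeasurableSet Γ)
    (ω : ℝ → ℝ) (hω : ∀ x ∈ Γ, 0 < ω x)
    (hmom : ∀ k : ℕ, IntegrableOn (fun x => x ^ k * ω x) Γ)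
    (p : ℕ → Polynomial ℝ) (hdeg : ∀ m, (p m).natDegree = m)
    (horth : ∀ m k, (∫ x in Γ, (p m).eval x * (p k).eval x * ω x) = if m = k then (1:ℝ) else 0)
    (n : ℕ)
    (x : Fin n → ℝ) (hroots : ∀ q, (p n).eval (x q) = 0) (hx : Function.Injective x)
    (w : Fin n → ℝ)
    (hexact : ∀ P : Polynomial ℝ, P.natDegree ≤ n - 1 →
      (∫ t in Γ, P.eval t * ω t) = ∑ q, P.eval (x q) * w q) :
    ∀ q, 0 < w q := by
  intro q
  have hp0 (m : ℕ) : p m ≠ 0 := fun h => by simpa [h] using horth m m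
  let S : Sequence ℝ := ⟨p, fun m => by rw [degree_eq_natDegree (hp0 m), hdeg]⟩
  have hΓ : volume.restrict Γ ≠ 0 := fun h => by simpa [h] using horth 0 0
  have hp_orth (Q : ℝ[X]) (hQ : Q.natDegree < n) : ∫ t in Γ, (p n * Q).eval t * ω t = 0 :=
    integral_eval_mul_mul_eq_zero_of_natDegree_lt hmom S
      (fun k hk => (horth n k).trans (if_neg hk.ne')) hQ
  have hexact_lt (P : ℝ[X]) (hP : P.natDegree < n) := hexact P (by omega)
  set ℓ := Lagrange.basis Finset.univ x q
  calc 0 < ∫ t in Γ, (ℓ ^ 2).eval t * ω t :=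
        integral_eval_mul_pos hΓ (ae_restrict_of_forall_mem hΓm hω) hmom
          (pow_ne_zero 2 (Lagrange.basis_ne_zero hx.injOn (Finset.mem_univ q)))
          (fun t => by rw [eval_pow]; exact sq_nonneg _)
    _ = ∑ r, (ℓ ^ 2).eval (x r) * w r :=
        integral_eval_mul_eq_sum_of_natDegree_lt_two_mul hmom (hdeg n) hp_orth hroots hexact_lt
          (by simpa using natDegree_lagrange_basis_sq_lt hx q)
    _ = w q := sum_eval_lagrange_basis_sq_mul hx w q

/-- Positivity of Gaussian quadrature weights: if the nodes are the roots of the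
`n`-th orthonormal polynomial and the weights make the rule exact on polynomials
of degree `≤ n - 1`, then all weights are strictly positive. -/
theorem stmt_2 (Γ : Set ℝ) (hΓm : MeasurableSet Γ)
    (ω : ℝ → ℝ) (hω : ∀ x ∈ Γ, 0 < ω x)
    (hmom : ∀ k : ℕ, IntegrableOn (fun x => x ^ k * ω x) Γ)
    (p : ℕ → Polynomial ℝ) (hdeg : ∀ m, (p m).natDegree = m)
    (horth : ∀ m k, (∫ x in Γ, (p m).eval x * (p k).eval x * ω x) = if m = k then (1:ℝ) else 0)
    (n : ℕ) (hn : 0 < n)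
    (x : Fin n → ℝ) (hroots : ∀ q, (p n).eval (x q) = 0) (hx : Function.Injective x)
    (w : Fin n → ℝ)
    (hexact : ∀ P : Polynomial ℝ, P.natDegree ≤ n - 1 →
      (∫ t in Γ, P.eval t * ω t) = ∑ q, P.eval (x q) * w q) :
    ∀ q, 0 < w q :=
  stmt_2_general Γ hΓm ω hω hmom p hdeg horth n x hroots hx w hexact
end

section
/- Let Λ ⊆ ℕ_0^d be downward closed. Any n-point quadrature rule that exactly matches all moments of orthonormal polynomials indexed by Λ must satisfy n ≥ max{ |Θ| : Θ ⊆ ℕ_0^d, Θ + Θ ⊆ Λ }. -/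
/-!
Polynomials `p` whose monomials all lie in the downward-closed set `Λ` are linear combinations of
the `π α`, `α ∈ Λ`, since `π` is triangular with nonzero diagonal; on their span the quadrature
rule and the weighted integral agree, because both are linear. For `α, β ∈ Θ` the product
`π α * π β` has its monomials below `α + β ∈ Λ`, so the quadrature reproduces the orthonormality
relations: with `B α q = π α (x q)` and `C q β = w q * π β (x q)` we get `B * C = 1`, a `Θ × Θ`
identity matrix factoring through `ℝⁿ`, whence `|Θ| ≤ n`.
-/

open MeasureTheory MvPolynomial

theorem Matrix.card_le_card_of_mul_eq_one {ι m R : Type*} [Fintype ι] [Fintype m] [DecidableEq ι]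
    [CommRing R] [StrongRankCondition R] {B : Matrix ι m R} {C : Matrix m ι R} (h : B * C = 1) :
    Fintype.card ι ≤ Fintype.card m :=
  calc Fintype.card ι = (B * C).rank := by rw [h, Matrix.rank_one]
    _ ≤ B.rank := Matrix.rank_mul_le_left B C
    _ ≤ Fintype.card m := Matrix.rank_le_card_width B

namespace MvPolynomial

variable {σ K : Type*} [Field K]

theorem mem_of_monomial_one_mem {S : Submodule K (MvPolynomial σ K)} {p : MvPolynomial σ K}
    (h : ∀ γ ∈ p.support, monomial γ (1 : K) ∈ S) : p ∈ S := by
  rw [p.as_sum]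
  refine Submodule.sum_mem _ fun γ hγ => ?_
  simpa [smul_monomial] using S.smul_mem (coeff γ p) (h γ hγ)

variable (π : (σ →₀ ℕ) → MvPolynomial σ K)
  (hsupp : ∀ α, ∀ γ ∈ (π α).support, γ ≤ α) (hlead : ∀ α, (π α).coeff α ≠ 0)
  {Λ : Set (σ →₀ ℕ)}
include hsupp hlead

theorem monomial_one_mem_span_image (hΛ : IsLowerSet Λ) {γ : σ →₀ ℕ} (hγ : γ ∈ Λ) :
    monomial γ (1 : K) ∈ Submodule.span K (π '' Λ) := by
  classical
  induction γ using WellFoundedLT.induction with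
  | _ γ ih =>
    set S := Submodule.span K (π '' Λ)
    have hγsupp : γ ∈ (π γ).support := mem_support_iff.2 (hlead γ)
    have lower_terms_mem :
        ∑ γ' ∈ (π γ).support.erase γ, monomial γ' ((π γ).coeff γ') ∈ S := by
      refine Submodule.sum_mem _ fun γ' hγ' => ?_
      have hle : γ' ≤ γ := hsupp γ γ' (Finset.mem_of_mem_erase hγ')
      have hlt : γ' < γ := lt_of_le_of_ne hle (Finset.ne_of_mem_erase hγ')
      simpa [smul_monomial] using
        S.smul_mem ((π γ).coeff γ') (ih γ' hlt (hΛ hle hγ))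
    have leading_term_mem : monomial γ ((π γ).coeff γ) ∈ S := by
      have hsplit : monomial γ ((π γ).coeff γ) =
          π γ - ∑ γ' ∈ (π γ).support.erase γ, monomial γ' ((π γ).coeff γ') := by
        rw [eq_sub_iff_add_eq, Finset.add_sum_erase _ (fun γ' => monomial γ' ((π γ).coeff γ')) hγsupp, ← (π γ).as_sum]
      rw [hsplit]
      exact S.sub_mem (Submodule.subset_span ⟨γ, hγ, rfl⟩) lower_terms_mem
    simpa [smul_monomial, inv_mul_cancel₀ (hlead γ)] using
      S.smul_mem ((π γ).coeff γ)⁻¹ leading_term_mem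

theorem mem_span_image_of_support_subset (hΛ : IsLowerSet Λ) {p : MvPolynomial σ K}
    (hp : ∀ γ ∈ p.support, γ ∈ Λ) : p ∈ Submodule.span K (π '' Λ) :=
  mem_of_monomial_one_mem fun γ hγ =>
    monomial_one_mem_span_image π hsupp hlead hΛ (hp γ hγ)

theorem mul_mem_span_image (hΛ : IsLowerSet Λ) {α β : σ →₀ ℕ} (hαβ : α + β ∈ Λ) :
    π α * π β ∈ Submodule.span K (π '' Λ) := by
  classical
  refine mem_span_image_of_support_subset π hsupp hlead hΛ fun γ hγ => ?_
  obtain ⟨a, ha, b, hb, rfl⟩ := Finset.mem_add.1 (support_mul _ _ hγ)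
  exact hΛ (add_le_add (hsupp α a ha) (hsupp β b hb)) hαβ

end MvPolynomial

section Quadrature

variable {σ : Type*} [MeasurableSpace (σ → ℝ)] (μ : Measure (σ → ℝ)) (ω : (σ → ℝ) → ℝ)
  {n : ℕ} (x : Fin n → σ → ℝ) (w : Fin n → ℝ)

def exactPolynomials : Submodule ℝ (MvPolynomial σ ℝ) where
  carrier := {p | Integrable (fun y => eval y p * ω y) μ ∧
    ∑ q, w q * eval (x q) p = ∫ y, eval y p * ω y ∂μ}
  zero_mem' := by simp
  add_mem' := by
    rintro p p' ⟨hp, hpq⟩ ⟨hp', hp'q⟩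
    refine ⟨by simp only [eval_add, add_mul]; exact hp.add hp', ?_⟩
    simp only [eval_add, mul_add, add_mul, Finset.sum_add_distrib, hpq, hp'q]
    exact (integral_add hp hp').symm
  smul_mem' := by
    rintro c p ⟨hp, hpq⟩
    refine ⟨by simpa [smul_eq_C_mul, mul_assoc] using hp.const_mul c, ?_⟩
    simp only [smul_eq_C_mul, eval_mul, eval_C, mul_assoc, ← Finset.mul_sum, mul_left_comm _ c,
      integral_const_mul, hpq]

variable {μ ω x w}

theorem quadrature_eq_integral_of_mem_span {S : Set (MvPolynomial σ ℝ)}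
    (hS : ∀ p ∈ S, p ∈ exactPolynomials μ ω x w) {p : MvPolynomial σ ℝ}
    (hp : p ∈ Submodule.span ℝ S) :
    ∑ q, w q * eval (x q) p = ∫ y, eval y p * ω y ∂μ :=
  (Submodule.span_le.2 hS hp).2

end Quadrature

theorem stmt_6_general (d : ℕ) (Γ : Set (Fin d → ℝ))
    (ω : (Fin d → ℝ) → ℝ)
    (π : (Fin d →₀ ℕ) → MvPolynomial (Fin d) ℝ)
    (hsupp : ∀ α : Fin d →₀ ℕ, ∀ γ ∈ (π α).support, γ ≤ α)
    (hlead : ∀ α : Fin d →₀ ℕ, (π α).coeff α ≠ 0)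
    (Λ : Finset (Fin d →₀ ℕ))
    (hdc : ∀ α ∈ Λ, ∀ β : Fin d →₀ ℕ, β ≤ α → β ∈ Λ)
    (hint1 : ∀ α ∈ Λ, IntegrableOn (fun x => MvPolynomial.eval x (π α) * ω x) Γ)
    (horth : ∀ α ∈ Λ, ∀ β ∈ Λ,
      (∫ x in Γ, MvPolynomial.eval x (π α) * MvPolynomial.eval x (π β) * ω x)
        = if α = β then (1:ℝ) else 0)
    (n : ℕ) (x : Fin n → Fin d → ℝ) (w : Fin n → ℝ)
    (hquad : ∀ α ∈ Λ, (∑ q, w q * MvPolynomial.eval (x q) (π α))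
        = ∫ x in Γ, MvPolynomial.eval x (π α) * ω x) :
    ∀ Θ : Finset (Fin d →₀ ℕ), (∀ α ∈ Θ, ∀ β ∈ Θ, α + β ∈ Λ) → Θ.card ≤ n := by
  classical
  intro Θ hΘ
  have hΛ : IsLowerSet (Λ : Set (Fin d →₀ ℕ)) := fun α β hβα hα => hdc α hα β hβα
  have hmem : ∀ α ∈ Θ, α ∈ Λ := fun α hα => hΛ le_self_add (hΘ α hα α hα)
  have hexact : ∀ p ∈ π '' Λ, p ∈ exactPolynomials (volume.restrict Γ) ω x w := by
    rintro _ ⟨α, hα, rfl⟩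
    exact ⟨hint1 α hα, hquad α hα⟩
  let B : Matrix Θ (Fin n) ℝ := fun α q => eval (x q) (π α)
  let C : Matrix (Fin n) Θ ℝ := fun q β => w q * eval (x q) (π β)
  have hBC : B * C = 1 := by
    ext α β
    have hgram := quadrature_eq_integral_of_mem_span hexact
      (mul_mem_span_image π hsupp hlead hΛ (hΘ α α.2 β β.2))
    simp only [eval_mul] at hgram
    rw [horth α (hmem α α.2) β (hmem β β.2)] at hgram
    simp only [Matrix.one_apply, Subtype.ext_iff, ← hgram, Matrix.mul_apply]
    exact Finset.sum_congr rfl fun q _ => mul_left_comm _ _ _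
  simpa using Matrix.card_le_card_of_mul_eq_one hBC

/-- Lower bound on quadrature size: any `n`-point rule matching all moments of
an orthonormal polynomial family indexed by a downward-closed set `Λ` satisfies
`n ≥ |Θ|` for every half-set `Θ` with `Θ + Θ ⊆ Λ`. -/
theorem stmt_6 (d : ℕ) (Γ : Set (Fin d → ℝ)) (hΓm : MeasurableSet Γ)
    (ω : (Fin d → ℝ) → ℝ) (hω : ∀ x ∈ Γ, 0 ≤ ω x)
    (π : (Fin d →₀ ℕ) → MvPolynomial (Fin d) ℝ)
    (hsupp : ∀ α : Fin d →₀ ℕ, ∀ γ ∈ (π α).support, γ ≤ α)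
    (hlead : ∀ α : Fin d →₀ ℕ, (π α).coeff α ≠ 0)
    (Λ : Finset (Fin d →₀ ℕ))
    (hdc : ∀ α ∈ Λ, ∀ β : Fin d →₀ ℕ, β ≤ α → β ∈ Λ)
    (hint1 : ∀ α ∈ Λ, IntegrableOn (fun x => MvPolynomial.eval x (π α) * ω x) Γ)
    (horth : ∀ α ∈ Λ, ∀ β ∈ Λ,
      (∫ x in Γ, MvPolynomial.eval x (π α) * MvPolynomial.eval x (π β) * ω x)
        = if α = β then (1:ℝ) else 0)
    (n : ℕ) (x : Fin n → Fin d → ℝ) (w : Fin n → ℝ)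
    (hquad : ∀ α ∈ Λ, (∑ q, w q * MvPolynomial.eval (x q) (π α))
        = ∫ x in Γ, MvPolynomial.eval x (π α) * ω x) :
    ∀ Θ : Finset (Fin d →₀ ℕ), (∀ α ∈ Θ, ∀ β ∈ Θ, α + β ∈ Λ) → Θ.card ≤ n :=
  stmt_6_general d Γ ω π hsupp hlead Λ hdc hint1 horth n x w hquad
end

section
/- The maximal half-set size of the total degree index set equals the cardinality of the half-degree simplex: for Λ = {α ∈ ℕ_0^d : |α| ≤ r}, one has max{|Θ| : Θ + Θ ⊆ Λ} = |{α ∈ ℕ_0^d : |α| ≤ ⌊r/2⌋}| = C(d + ⌊r/2⌋, d). -/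
/-!
If `Θ + Θ ⊆ Λ` then `2α ∈ Λ`, i.e. `|α| ≤ ⌊r/2⌋`, for every `α ∈ Θ`, so `Θ` lies in the half-degree
simplex; conversely that simplex satisfies `Θ + Θ ⊆ Λ` itself. Its size `C(d + ⌊r/2⌋, d)` is
counted by stars and bars.
-/

open Finset

section TotalDegree

variable (ι : Type*) [Fintype ι] [DecidableEq ι]

/-- Stars and bars: a tuple on `ι` with sum at most `m` is a tuple on `Option ι` with sum exactly
`m`, whose `none` coordinate is the slack. -/
def totalDegreeLE (m : ℕ) : Finset (ι → ℕ) :=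
  (piAntidiag univ m).image fun f : Option ι → ℕ => f ∘ some

variable {ι}

theorem mem_totalDegreeLE {m : ℕ} {α : ι → ℕ} : α ∈ totalDegreeLE ι m ↔ ∑ i, α i ≤ m := by
  simp only [totalDegreeLE, mem_image, mem_piAntidiag, Fintype.sum_option, ne_eq, mem_univ,
    implies_true, and_true]
  constructor
  · rintro ⟨f, hf, rfl⟩
    exact hf ▸ Nat.le_add_left _ _
  · intro h
    refine ⟨fun o => o.elim (m - ∑ i, α i) α, ?_, rfl⟩
    simp only [Option.elim_none, Option.elim_some]
    omega

theorem injOn_comp_some_piAntidiag (m : ℕ) :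
    Set.InjOn (fun f : Option ι → ℕ => f ∘ some) ↑(piAntidiag (univ : Finset (Option ι)) m) := by
  intro f hf g hg hfg
  simp only [mem_coe, mem_piAntidiag, Fintype.sum_option] at hf hg
  have hsome : ∀ i, f (some i) = g (some i) := congrFun hfg
  funext o
  cases o with
  | none =>
    have hsum : ∑ i, f (some i) = ∑ i, g (some i) := Fintype.sum_congr _ _ hsome
    omega
  | some i => exact hsome i

theorem card_piAntidiag_nat {κ : Type*} [DecidableEq κ] (s : Finset κ) (n : ℕ) :
    #(piAntidiag s n) = (#s + n - 1).choose n := by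
  rw [← card_finsuppAntidiag_nat_eq_choose, finsuppAntidiag, card_map, card_attach]

theorem card_totalDegreeLE (m : ℕ) :
    #(totalDegreeLE ι m) = (Fintype.card ι + m).choose (Fintype.card ι) := by
  rw [totalDegreeLE, card_image_of_injOn (injOn_comp_some_piAntidiag m), card_piAntidiag_nat,
    card_univ, Fintype.card_option, Nat.add_right_comm, Nat.add_sub_cancel,
    Nat.choose_symm_add]

end TotalDegree

/-- The maximal half-set size of the total degree index set
`Λ = {α : |α| ≤ r}` equals the cardinality of the half-degree simplex
`{α : |α| ≤ ⌊r/2⌋}`, which is the binomial coefficient `C(d + ⌊r/2⌋, d)`. -/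
theorem stmt_18 (d r : ℕ) :
    IsGreatest { k : ℕ | ∃ Θ : Finset (Fin d → ℕ),
        (∀ α ∈ Θ, ∀ β ∈ Θ, (∑ j, (α j + β j)) ≤ r) ∧ Θ.card = k }
      (Nat.choose (d + r / 2) d) ∧
    {α : Fin d → ℕ | (∑ j, α j) ≤ r / 2}.ncard = Nat.choose (d + r / 2) d := by
  have hcard : #(totalDegreeLE (Fin d) (r / 2)) = (d + r / 2).choose d := by
    rw [card_totalDegreeLE, Fintype.card_fin]
  refine ⟨⟨⟨totalDegreeLE (Fin d) (r / 2), fun α hα β hβ => ?_, hcard⟩, ?_⟩, ?_⟩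
  · rw [mem_totalDegreeLE] at hα hβ
    rw [sum_add_distrib]
    omega
  · rintro k ⟨Θ, hΘ, rfl⟩
    refine hcard ▸ card_le_card fun α hα => mem_totalDegreeLE.2 ?_
    have hdouble := hΘ α hα α hα
    rw [sum_add_distrib] at hdouble
    omega
  · rw [← hcard, ← Set.ncard_coe_finset]
    congr 1
    ext α
    exact mem_totalDegreeLE.symm
end
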